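/- Suppose z = Σ_{b ∈ (ℤ/m)^r} c_b x_{(r)} L^b lies in x_{(r)}H_u(r) ∩ H_u(r)x_{(r)}, where x_{(r)} = Σ_{w ∈ S_r} T_w. Then the coefficients are symmetric: c_b = c_{b·w} for all b ∈ (ℤ/m)^r and all w ∈ S_r, where b·w = (b_{w(1)},…,b_{w(r)}). -/

import Mathlib

/-- The monomial `L^b = L_1^{b_1} ⋯ L_r^{b_r}` with exponent vector `b ∈ {0,…,m−1}^r`. -/
def akLmonF {H : Type} [Ring H] (L : ℕ → H) {r m : ℕ} (b : Fin r → Fin m) : H :=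
  (List.ofFn (fun j : Fin r => L ((j : ℕ) + 1) ^ ((b j : ℕ)))).prod

/-- Coxeter length (number of inversions) of a permutation of `{0,…,r−1}`. -/
def permLen {r : ℕ} (w : Equiv.Perm (Fin r)) : ℕ :=
  (Finset.univ.filter (fun p : Fin r × Fin r => p.1 < p.2 ∧ w p.2 < w p.1)).card

/-!
Fix an adjacent transposition `s = (i, i+1)` and write `β ↦ β s` for the induced swap of
exponent vectors. Pairing `w` with `w s` gives `x = (Σ_{ℓ(w s) > ℓ(w)} T_w) (1 + T_s)`, and
`(1 + T_s) T_s = q (1 + T_s)`, so `x T_s = q x`. Together with the quadratic relation and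
`T_s L_i T_s = q L_{i+1}` this gives the straightening rule
`x L^β T_s = q x L^{β s} + (q - 1) (Σ_{γ ∈ S(β)} x L^γ - Σ_{γ ∈ S(β s)} x L^γ)`,
where `S(β)` is the set of exponent vectors obtained from `β` by redistributing `β_i + β_{i+1}`
between positions `i` and `i+1` with `β_i ≤ γ_i < β_{i+1}`. Apart from `β` itself, every such
`γ` has strictly smaller gap `|γ_i - γ_{i+1}|`.

If `z = h x` then `z T_s = q z`, and comparing coefficients in the basis `x L^β` shows that the
differences `c_β - c_{β s}` solve a linear system that is triangular for the gap, with
diagonal entries `-1` or `-q`. Hence they vanish, and adjacent transpositions generate `S_r`.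
-/

open Finset

theorem sum_range_sub_sum_range_eq_sum_Ico_sub {M : Type*} [AddCommGroup M] (f : ℕ → M) (a b : ℕ) :
    ∑ k ∈ range b, f k - ∑ k ∈ range a, f k = ∑ k ∈ Ico a b, f k - ∑ k ∈ Ico b a, f k := by
  rcases le_total a b with h | h
  · rw [sum_Ico_eq_sub _ h, Ico_eq_empty_of_le h, sum_empty, sub_zero]
  · rw [sum_Ico_eq_sub _ h, Ico_eq_empty_of_le h, sum_empty, zero_sub, neg_sub]

theorem List.exists_prod_ofFn_eq_mul_mul {M : Type*} [Monoid M] (S : Submonoid M) {r p : ℕ}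
    (hp : p + 1 < r) (f : Fin r → M) (hf : ∀ j : Fin r, (j : ℕ) ≠ p → (j : ℕ) ≠ p + 1 → f j ∈ S) :
    ∃ A ∈ S, ∃ B ∈ S, ∀ g : Fin r → M, (∀ j : Fin r, (j : ℕ) ≠ p → (j : ℕ) ≠ p + 1 → g j = f j) →
      (List.ofFn g).prod = A * (g ⟨p, by omega⟩ * g ⟨p + 1, hp⟩) * B := by
  obtain ⟨n, rfl⟩ : ∃ n, r = p + 2 + n := ⟨r - (p + 2), by omega⟩
  refine ⟨(List.ofFn fun j : Fin p => f ⟨j, by omega⟩).prod, ?_,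
    (List.ofFn fun j : Fin n => f ⟨p + 2 + j, by omega⟩).prod, ?_, fun g hg => ?_⟩
  · refine S.list_prod_mem fun x hx => ?_
    obtain ⟨j, rfl⟩ := List.mem_ofFn.1 hx
    exact hf _ (by simp; omega) (by simp; omega)
  · refine S.list_prod_mem fun x hx => ?_
    obtain ⟨j, rfl⟩ := List.mem_ofFn.1 hx
    exact hf _ (by simp; omega) (by simp; omega)
  · rw [List.ofFn_add, List.ofFn_add, List.prod_append, List.prod_append]
    simp only [List.ofFn_succ, List.ofFn_zero, List.prod_cons, List.prod_nil, mul_one]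
    congr 3
    · congr 1
      funext j
      exact hg _ (by simp; omega) (by simp; omega)
    · funext j
      exact (hg _ (by simp; omega) (by simp; omega)).trans (congrArg f (Fin.ext (by simp)))

section HeckeRelations

variable {R H : Type*} [CommRing R] [Ring H] [Algebra R H] {q : R} {t X Y : H}

theorem mul_self_eq_of_quadratic (ht : (t + 1) * (t - algebraMap R H q) = 0) :
    t * t = (q - 1) • t + q • 1 := by
  rw [Algebra.algebraMap_eq_smul_one] at ht
  simp only [add_mul, mul_sub, mul_smul_comm, mul_one, one_mul] at ht
  rw [← sub_eq_zero, ← ht]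
  module

theorem mul_eq_mul_add_smul_of_conj (hq : IsUnit q) (ht : t * t = (q - 1) • t + q • 1)
    (hXY : t * X * t = q • Y) : Y * t = t * X + (q - 1) • Y := by
  rw [← hq.smul_left_cancel, ← smul_mul_assoc, ← hXY, mul_assoc, ht]
  simp only [mul_add, mul_smul_comm, mul_one, smul_add, hXY, smul_smul]
  module

theorem mul_eq_mul_sub_smul_of_conj (hq : IsUnit q) (ht : t * t = (q - 1) • t + q • 1)
    (hXY : t * X * t = q • Y) : X * t = t * Y - (q - 1) • Y := by
  rw [eq_sub_iff_add_eq, ← hq.smul_left_cancel, ← mul_smul_comm, ← hXY,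
    show t * (t * X * t) = t * t * (X * t) by noncomm_ring, ht]
  simp only [add_mul, smul_mul_assoc, one_mul, ← mul_assoc, hXY, smul_add, smul_smul]
  module

theorem pow_mul_eq_mul_pow_add_smul (hXY : Commute X Y) (hYt : Y * t = t * X + (q - 1) • Y)
    (b : ℕ) :
    Y ^ b * t = t * X ^ b + (q - 1) • ∑ k ∈ range b, X ^ k * Y ^ (b - k) := by
  induction b with
  | zero => simp
  | succ b ih =>
    have hterm : ∀ k ∈ range b, Y * (X ^ k * Y ^ (b - k)) = X ^ k * Y ^ (b + 1 - k) := by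
      intro k hk
      rw [← mul_assoc, ← (hXY.pow_left k).eq, mul_assoc, ← pow_succ',
        Nat.sub_add_comm (mem_range.1 hk).le]
    calc Y ^ (b + 1) * t = Y * (Y ^ b * t) := by rw [pow_succ', mul_assoc]
      _ = Y * t * X ^ b + (q - 1) • ∑ k ∈ range b, Y * (X ^ k * Y ^ (b - k)) := by
        rw [ih, mul_add, mul_smul_comm, mul_sum, mul_assoc]
      _ = t * X ^ (b + 1) + (q - 1) • (∑ k ∈ range b, X ^ k * Y ^ (b + 1 - k) + X ^ b * Y) := by
        rw [hYt, add_mul, mul_assoc, ← pow_succ', smul_mul_assoc, ← (hXY.pow_left b).eq,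
          sum_congr rfl hterm]
        module
      _ = t * X ^ (b + 1) + (q - 1) • ∑ k ∈ range (b + 1), X ^ k * Y ^ (b + 1 - k) := by
        rw [sum_range_succ, Nat.add_sub_cancel_left, pow_one]

theorem pow_mul_pow_mul_eq (hXY : Commute X Y) (hYt : Y * t = t * X + (q - 1) • Y)
    (hXt : X * t = t * Y - (q - 1) • Y) (a b : ℕ) :
    X ^ a * Y ^ b * t = t * (X ^ b * Y ^ a) + (q - 1) •
      (∑ k ∈ range b, X ^ k * Y ^ (a + b - k) - ∑ k ∈ range a, X ^ k * Y ^ (a + b - k)) := by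
  induction a with
  | zero => simpa using pow_mul_eq_mul_pow_add_smul hXY hYt b
  | succ a ih =>
    set f : ℕ → H := fun k => X ^ k * Y ^ (a + 1 + b - k)
    have hshift : ∀ k, X * (X ^ k * Y ^ (a + b - k)) = f (k + 1) := by
      intro k
      simp only [f, ← mul_assoc, ← pow_succ']
      congr 2
      omega
    have hYXY : Y * (X ^ b * Y ^ a) = X ^ b * Y ^ (a + 1) := by
      rw [← mul_assoc, ← (hXY.pow_left b).eq, mul_assoc, ← pow_succ']
    calc X ^ (a + 1) * Y ^ b * t = X * (X ^ a * Y ^ b * t) := by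
          rw [pow_succ', mul_assoc X, mul_assoc X]
      _ = X * t * (X ^ b * Y ^ a) + (q - 1) •
          (∑ k ∈ range b, f (k + 1) - ∑ k ∈ range a, f (k + 1)) := by
        rw [ih, mul_add, mul_smul_comm, mul_sub, mul_sum, mul_sum, mul_assoc]
        simp only [hshift]
      _ = t * (X ^ b * Y ^ (a + 1)) + (q - 1) •
          ((∑ k ∈ range (b + 1), f k - f 0) - (∑ k ∈ range (a + 1), f k - f 0) - f b) := by
        rw [hXt, sub_mul, mul_assoc, smul_mul_assoc, hYXY, sum_range_succ' f b,
          sum_range_succ' f a, show f b = X ^ b * Y ^ (a + 1) by simp [f]]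
        module
      _ = t * (X ^ b * Y ^ (a + 1)) + (q - 1) •
          (∑ k ∈ range b, f k - ∑ k ∈ range (a + 1), f k) := by
        rw [sum_range_succ f b]
        abel_nf

end HeckeRelations

section Triangular

variable {ι R M : Type*} [Fintype ι] [CommRing R]

theorem eq_zero_of_triangular (gap : ι → ℕ) (A : ι → ι → R)
    (hA : ∀ β γ, A β γ ≠ 0 → β = γ ∨ gap γ < gap β) (hdiag : ∀ γ, IsUnit (A γ γ))
    (d : ι → R) (hd : ∀ γ, ∑ β, A β γ * d β = 0) : d = 0 := by
  classical
  by_contra hne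
  obtain ⟨γ, hγ, hmax⟩ := (univ.filter (d · ≠ 0)).exists_max_image gap
    (by simpa [Finset.Nonempty, funext_iff] using hne)
  have hsum : ∑ β, A β γ * d β = A γ γ * d γ := by
    refine sum_eq_single γ (fun β _ hβγ => ?_) (by simp)
    by_cases hAβ : A β γ = 0
    · rw [hAβ, zero_mul]
    have hgap := (hA β γ hAβ).resolve_left hβγ
    by_contra hβ
    have := hmax β (by simpa using right_ne_zero_of_mul hβ)
    omega
  rw [hd γ, eq_comm, (hdiag γ).mul_right_eq_zero] at hsum
  exact (mem_filter.1 hγ).2 hsum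

variable [AddCommGroup M] [Module R M] [DecidableEq ι] {q : R} (f : M →ₗ[R] M) {v : ι → M}
  {σ : ι → ι} (S : ι → Finset ι)

theorem sum_smul_eq_zero_of_apply_eq_smul (hσ : Function.Involutive σ)
    (hf : ∀ β, f (v β) = q • v (σ β) + (q - 1) • (∑ γ ∈ S β, v γ - ∑ γ ∈ S (σ β), v γ))
    (c : ι → R) (hc : f (∑ β, c β • v β) = q • ∑ β, c β • v β) :
    ∑ γ, ((q - 1) * ∑ β, (if γ ∈ S β then c β - c (σ β) else 0) - q * (c γ - c (σ γ))) • v γ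
      = 0 := by
  set d : ι → R := fun β => c β - c (σ β)
  show ∑ γ, ((q - 1) * ∑ β, (if γ ∈ S β then d β else 0) - q * d γ) • v γ = 0
  have hreindex : ∀ g : ι → M, ∑ β, g (σ β) = ∑ β, g β := hσ.bijective.sum_comp
  have hswap : ∑ β, d β • ∑ γ ∈ S β, v γ
      = ∑ γ, (∑ β, if γ ∈ S β then d β else 0) • v γ := by
    simp only [sum_smul, smul_sum, ite_smul, zero_smul]
    rw [sum_comm]
    simp
  have hfz : f (∑ β, c β • v β)
      = q • ∑ β, c (σ β) • v β + (q - 1) • ∑ β, d β • ∑ γ ∈ S β, v γ := by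
    have e1 : ∑ β, c β • q • v (σ β) = q • ∑ β, c (σ β) • v β := by
      conv_rhs => rw [← hreindex]
      simp only [hσ _, smul_sum, smul_comm q]
    have e2 : ∑ β, c β • (q - 1) • ∑ γ ∈ S (σ β), v γ
        = ∑ β, c (σ β) • (q - 1) • ∑ γ ∈ S β, v γ := by
      conv_rhs => rw [← hreindex]
      simp only [hσ _]
    simp only [map_sum, map_smul, hf, smul_add, smul_sub, sum_add_distrib, sum_sub_distrib, e1,
      e2]
    congr 1
    rw [smul_sum, ← sum_sub_distrib]
    refine sum_congr rfl fun β _ => ?_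
    simp only [d]
    module
  calc _ = (q - 1) • ∑ γ, (∑ β, if γ ∈ S β then d β else 0) • v γ - q • ∑ γ, d γ • v γ := by
        simp only [sub_smul, mul_smul, sum_sub_distrib, smul_sum]
    _ = f (∑ β, c β • v β) - q • ∑ β, c β • v β := by
        rw [← hswap, hfz]
        simp only [d, sub_smul, sum_sub_distrib, smul_sub]
        abel
    _ = 0 := by rw [hc, sub_self]

theorem comp_eq_of_apply_eq_smul (hq : IsUnit q) (hv : LinearIndependent R v)
    (hσ : Function.Involutive σ) (gap : ι → ℕ) (hS : ∀ β, ∀ γ ∈ S β, γ = β ∨ gap γ < gap β)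
    (hf : ∀ β, f (v β) = q • v (σ β) + (q - 1) • (∑ γ ∈ S β, v γ - ∑ γ ∈ S (σ β), v γ))
    (c : ι → R) (hc : f (∑ β, c β • v β) = q • ∑ β, c β • v β) : c ∘ σ = c := by
  have hcoeff := Fintype.linearIndependent_iff.1 hv _
    (sum_smul_eq_zero_of_apply_eq_smul f S hσ hf c hc)
  have hd := eq_zero_of_triangular gap
    (fun β γ => (q - 1) * (if γ ∈ S β then 1 else 0) - if β = γ then q else 0) ?_ ?_
    (fun β => c β - c (σ β)) fun γ => ?_
  · funext β
    exact (sub_eq_zero.1 (congrFun hd (σ β))).trans (by rw [hσ β])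
  · intro β γ h
    by_cases hγ : γ ∈ S β
    · exact (hS β γ hγ).imp Eq.symm id
    · left
      by_contra hβγ
      simp [hγ, hβγ] at h
  · intro γ
    by_cases hγ : γ ∈ S γ
    · simp [hγ]
    · simpa [hγ] using hq.neg
  · refine Eq.trans ?_ (hcoeff γ)
    simp [sub_mul, sum_sub_distrib, mul_sum, ite_mul]

end Triangular

section Symmetrizer

variable {G H : Type*} [Group G] [Fintype G] [Ring H]

theorem sum_eq_sum_filter_mul_one_add (F : G → H) (t : H) (g0 : G) (P : G → Prop) [DecidablePred P]
    (hP : ∀ g, P (g * g0) ↔ ¬ P g) (hF : ∀ g, P g → F (g * g0) = F g * t) :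
    ∑ g, F g = (∑ g ∈ univ.filter P, F g) * (1 + t) := by
  have hnot : ∑ g ∈ univ.filter (¬ P ·), F g = ∑ g ∈ univ.filter P, F g * t := by
    rw [sum_filter, sum_filter, ← Equiv.sum_comp (Equiv.mulRight g0)]
    refine sum_congr rfl fun g _ => ?_
    simp only [Equiv.coe_mulRight, hP, not_not]
    split_ifs with hg
    · exact hF g hg
    · rfl
  rw [← sum_filter_add_sum_filter_not univ P, hnot, mul_one_add, sum_mul]

variable {R : Type*} [CommRing R] [Algebra R H] {q : R}

theorem sum_mul_eq_smul_sum_of_quadratic (F : G → H) (t : H) (g0 : G) (P : G → Prop)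
    [DecidablePred P] (hP : ∀ g, P (g * g0) ↔ ¬ P g) (hF : ∀ g, P g → F (g * g0) = F g * t)
    (ht : (t + 1) * (t - algebraMap R H q) = 0) : (∑ g, F g) * t = q • ∑ g, F g := by
  rw [sum_eq_sum_filter_mul_one_add F t g0 P hP hF, mul_assoc, add_mul, one_mul,
    mul_self_eq_of_quadratic ht, ← mul_smul_comm]
  congr 1
  module

end Symmetrizer

theorem comp_perm_eq_of_comp_swap {α β : Type*} {r : ℕ} (c : (Fin r → α) → β)
    (h : ∀ a b : Fin r, (a : ℕ) + 1 = b → ∀ f, c (f ∘ Equiv.swap a b) = c f)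
    (w : Equiv.Perm (Fin r)) (f : Fin r → α) : c (f ∘ w) = c f := by
  cases r with
  | zero => exact congrArg c (Subsingleton.elim _ _)
  | succ n =>
    have hw : w ∈ Submonoid.closure (Set.range fun j : Fin n => Equiv.swap j.castSucc j.succ) := by
      rw [Equiv.Perm.mclosure_swap_castSucc_succ]
      exact Submonoid.mem_top w
    induction hw using Submonoid.closure_induction generalizing f with
    | mem _ hs =>
      obtain ⟨j, rfl⟩ := hs
      exact h _ _ (by simp) f
    | one => rfl
    | mul w₁ w₂ _ _ ih₁ ih₂ => exact (ih₂ (f ∘ w₁)).trans (ih₁ f)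

namespace ArikiKoike

section Length

variable {r : ℕ} {a b : Fin r}

def inversions (w : Equiv.Perm (Fin r)) : Finset (Fin r × Fin r) :=
  univ.filter fun p => p.1 < p.2 ∧ w p.2 < w p.1

theorem mem_inversions {w : Equiv.Perm (Fin r)} {p : Fin r × Fin r} :
    p ∈ inversions w ↔ p.1 < p.2 ∧ w p.2 < w p.1 := by
  simp [inversions]

theorem inversions_mul_swap (hab : (a : ℕ) + 1 = b) {w : Equiv.Perm (Fin r)} (h : w a < w b) :
    inversions (w * Equiv.swap a b) =
      insert (a, b)
        ((inversions w).map (Equiv.prodCongr (Equiv.swap a b) (Equiv.swap a b)).toEmbedding) := by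
  ext ⟨x, y⟩
  simp only [mem_inversions, mem_insert, mem_map_equiv, Prod.mk.injEq, Equiv.Perm.mul_apply,
    Equiv.prodCongr_symm, Equiv.symm_swap, Equiv.prodCongr_apply, Prod.map]
  rw [Equiv.swap_apply_def, Equiv.swap_apply_def]
  split_ifs <;> subst_vars <;>
    simp only [Fin.lt_def, Fin.ext_iff, and_self, true_or, iff_true] at * <;> omega

theorem permLen_mul_swap (hab : (a : ℕ) + 1 = b) {w : Equiv.Perm (Fin r)} (h : w a < w b) :
    permLen (w * Equiv.swap a b) = permLen w + 1 := by
  change (inversions _).card = (inversions w).card + 1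
  rw [inversions_mul_swap hab h, card_insert_of_notMem, card_map]
  rw [mem_map_equiv, mem_inversions]
  simp only [Equiv.prodCongr_symm, Equiv.symm_swap, Equiv.prodCongr_apply, Prod.map,
    Equiv.swap_apply_left, Equiv.swap_apply_right, Fin.lt_def]
  omega

theorem permLen_one : permLen (1 : Equiv.Perm (Fin r)) = 0 := by
  rw [permLen, card_eq_zero, filter_eq_empty_iff]
  exact fun p _ h => h.1.asymm h.2

theorem permLen_swap (hab : (a : ℕ) + 1 = b) : permLen (Equiv.swap a b) = 1 := by
  simpa [permLen_one] using permLen_mul_swap (w := 1) hab (Fin.lt_def.2 (by simp; omega))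

end Length

section Transfer

variable {r m : ℕ} {a b : Fin r}

def transferSet (a b : Fin r) (β : Fin r → Fin m) : Finset (Fin r → Fin m) :=
  univ.filter fun γ => (∀ j, j ≠ a → j ≠ b → γ j = β j) ∧
    (γ a : ℕ) + γ b = β a + β b ∧ (β a : ℕ) ≤ γ a ∧ (γ a : ℕ) < β b

theorem mem_transferSet {β γ : Fin r → Fin m} : γ ∈ transferSet a b β ↔
    (∀ j, j ≠ a → j ≠ b → γ j = β j) ∧ (γ a : ℕ) + γ b = β a + β b ∧ (β a : ℕ) ≤ γ a ∧
      (γ a : ℕ) < β b := by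
  simp [transferSet]

theorem eq_or_dist_lt_of_mem_transferSet (hab : a ≠ b) {β γ : Fin r → Fin m}
    (h : γ ∈ transferSet a b β) : γ = β ∨ Nat.dist (γ a) (γ b) < Nat.dist (β a) (β b) := by
  obtain ⟨hoff, hsum, hle, hlt⟩ := mem_transferSet.1 h
  by_cases hγa : (γ a : ℕ) = β a
  · left
    funext j
    by_cases hja : j = a
    · subst hja; exact Fin.ext hγa
    by_cases hjb : j = b
    · subst hjb; exact Fin.ext (by omega)
    exact hoff j hja hjb
  · right
    simp only [Nat.dist]
    omega

theorem sum_transferSet {M : Type*} [AddCommMonoid M] (hab : a ≠ b) (β : Fin r → Fin m)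
    (φ : ℕ → ℕ → M) :
    ∑ γ ∈ transferSet a b β, φ (γ a) (γ b) = ∑ k ∈ Ico (β a : ℕ) (β b), φ k (β a + β b - k) := by
  refine sum_bij (fun γ _ => (γ a : ℕ)) (fun γ hγ => ?_) (fun γ₁ h₁ γ₂ h₂ h => ?_)
    (fun k hk => ?_) (fun γ hγ => ?_)
  · obtain ⟨-, -, hle, hlt⟩ := mem_transferSet.1 hγ
    exact mem_Ico.2 ⟨hle, hlt⟩
  · obtain ⟨hoff₁, hsum₁, -⟩ := mem_transferSet.1 h₁
    obtain ⟨hoff₂, hsum₂, -⟩ := mem_transferSet.1 h₂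
    funext j
    by_cases hja : j = a
    · subst hja; exact Fin.ext h
    by_cases hjb : j = b
    · subst hjb; exact Fin.ext (by omega)
    rw [hoff₁ j hja hjb, hoff₂ j hja hjb]
  · obtain ⟨hle, hlt⟩ := mem_Ico.1 hk
    have hkm : k < m := hlt.trans (β b).isLt
    have hkm' : β a + β b - k < m := by omega
    refine ⟨Function.update (Function.update β a ⟨k, hkm⟩) b ⟨β a + β b - k, hkm'⟩, ?_, ?_⟩
    · rw [mem_transferSet]
      simp only [Function.update_self, Function.update_of_ne hab]
      refine ⟨fun j hja hjb => ?_, by omega, hle, hlt⟩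
      rw [Function.update_of_ne hjb, Function.update_of_ne hja]
    · simp [Function.update_of_ne hab]
  · obtain ⟨-, hsum, -⟩ := mem_transferSet.1 hγ
    congr 1
    omega

end Transfer

section Monomial

variable {R H : Type} [CommRing R] [Ring H] [Algebra R H] {q : R} {t : H} {L : ℕ → H}
  {r m : ℕ} {a b : Fin r}

theorem exists_akLmonF_eq_mul_mul (hab : (a : ℕ) + 1 = b)
    (hLt : ∀ j : Fin r, j ≠ a → j ≠ b → Commute (L (j + 1)) t) (β : Fin r → Fin m) :
    ∃ A B : H, Commute t A ∧ Commute t B ∧ ∀ γ : Fin r → Fin m,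
      (∀ j, j ≠ a → j ≠ b → γ j = β j) →
        akLmonF L γ = A * (L (a + 1) ^ (γ a : ℕ) * L (b + 1) ^ (γ b : ℕ)) * B := by
  have hoff : ∀ j : Fin r, (j : ℕ) ≠ a → (j : ℕ) ≠ a + 1 → j ≠ a ∧ j ≠ b := fun j hja hjb =>
    ⟨fun hj => hja (by rw [hj]), fun hj => hjb (by rw [hj, hab])⟩
  obtain ⟨A, hA, B, hB, hsplit⟩ := List.exists_prod_ofFn_eq_mul_mul (Submonoid.centralizer {t})
    (p := a) (by omega) (fun j => L (j + 1) ^ (β j : ℕ)) fun j hja hjb =>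
      Submonoid.mem_centralizer_iff.2 fun _ h => by
        rw [Set.mem_singleton_iff.1 h]
        exact (((hLt j (hoff j hja hjb).1 (hoff j hja hjb).2).pow_left _).symm).eq
  refine ⟨A, B, Submonoid.mem_centralizer_iff.1 hA t rfl, Submonoid.mem_centralizer_iff.1 hB t rfl,
    fun γ hγ => ?_⟩
  rw [akLmonF, hsplit _ fun j hja hjb => by rw [hγ j (hoff j hja hjb).1 (hoff j hja hjb).2]]
  simp only [hab]

theorem akLmonF_mul (hab : (a : ℕ) + 1 = b) (hXY : Commute (L (a + 1)) (L (b + 1)))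
    (hYt : L (b + 1) * t = t * L (a + 1) + (q - 1) • L (b + 1))
    (hXt : L (a + 1) * t = t * L (b + 1) - (q - 1) • L (b + 1))
    (hLt : ∀ j : Fin r, j ≠ a → j ≠ b → Commute (L (j + 1)) t) (β : Fin r → Fin m) :
    akLmonF L β * t = t * akLmonF L (β ∘ Equiv.swap a b) + (q - 1) •
      (∑ γ ∈ transferSet a b β, akLmonF L γ -
        ∑ γ ∈ transferSet a b (β ∘ Equiv.swap a b), akLmonF L γ) := by
  have hne : a ≠ b := fun h => by simp [h] at hab
  obtain ⟨A, B, hA, hB, hmon⟩ := exists_akLmonF_eq_mul_mul hab hLt β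
  set φ : ℕ → ℕ → H := fun i j => A * (L (a + 1) ^ i * L (b + 1) ^ j) * B
  have hS : ∀ β' : Fin r → Fin m, (∀ j, j ≠ a → j ≠ b → β' j = β j) →
      ∑ γ ∈ transferSet a b β', akLmonF L γ =
        ∑ k ∈ Ico (β' a : ℕ) (β' b), φ k (β' a + β' b - k) := by
    intro β' hβ'
    rw [← sum_transferSet hne β' φ]
    refine sum_congr rfl fun γ hγ => hmon γ fun j hja hjb => ?_
    rw [(mem_transferSet.1 hγ).1 j hja hjb, hβ' j hja hjb]
  have hswap : ∀ j, j ≠ a → j ≠ b → (β ∘ Equiv.swap a b) j = β j := fun j hja hjb => by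
    simp [Equiv.swap_apply_of_ne_of_ne hja hjb]
  rw [hS β fun _ _ _ => rfl, hS _ hswap, hmon β fun _ _ _ => rfl, hmon _ hswap]
  simp only [Function.comp_apply, Equiv.swap_apply_left, Equiv.swap_apply_right]
  rw [add_comm (β b : ℕ), ← sum_range_sub_sum_range_eq_sum_Ico_sub]
  simp only [φ, ← mul_sum, ← sum_mul, ← mul_sub, ← sub_mul]
  calc A * (L (a + 1) ^ (β a : ℕ) * L (b + 1) ^ (β b : ℕ)) * B * t
      = A * (L (a + 1) ^ (β a : ℕ) * L (b + 1) ^ (β b : ℕ) * t) * B := by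
        rw [mul_assoc _ B, ← hB.eq, ← mul_assoc, mul_assoc A]
    _ = t * (A * (L (a + 1) ^ (β b : ℕ) * L (b + 1) ^ (β a : ℕ)) * B) + (q - 1) •
        (A * (∑ k ∈ range (β b : ℕ), L (a + 1) ^ k * L (b + 1) ^ ((β a : ℕ) + β b - k)
          - ∑ k ∈ range (β a : ℕ), L (a + 1) ^ k * L (b + 1) ^ ((β a : ℕ) + β b - k)) * B) := by
        rw [pow_mul_pow_mul_eq hXY hYt hXt, mul_add, add_mul, ← mul_assoc A t, ← hA.eq,
          mul_assoc t, mul_assoc t, mul_smul_comm, smul_mul_assoc]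

end Monomial

section SwapSymmetrizer

variable {R H : Type*} [CommRing R] [Ring H] [Algebra R H] {q : R} {r : ℕ} {a b : Fin r}

theorem sum_mul_swap_eq_smul_sum (Tw : Equiv.Perm (Fin r) → H)
    (hTwmul : ∀ w w' : Equiv.Perm (Fin r), permLen (w * w') = permLen w + permLen w' →
      Tw (w * w') = Tw w * Tw w')
    (hab : (a : ℕ) + 1 = b)
    (ht : (Tw (Equiv.swap a b) + 1) * (Tw (Equiv.swap a b) - algebraMap R H q) = 0) :
    (∑ w, Tw w) * Tw (Equiv.swap a b) = q • ∑ w, Tw w := by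
  have hne : a ≠ b := fun h => by simp [h] at hab
  refine sum_mul_eq_smul_sum_of_quadratic Tw _ _ (fun w => w a < w b) (fun w => ?_)
    (fun w hw => hTwmul w _ (by rw [permLen_mul_swap hab hw, permLen_swap hab])) ht
  simp only [Equiv.Perm.mul_apply, Equiv.swap_apply_left, Equiv.swap_apply_right]
  rw [not_lt, (w.injective.ne hne.symm).le_iff_lt]

end SwapSymmetrizer

section Coefficients

variable {R H : Type} [CommRing R] [Ring H] [Algebra R H] {q : R} {t x : H} {L : ℕ → H}
  {r m : ℕ} {a b : Fin r}

theorem comp_swap_eq_of_mul_eq_smul (hq : IsUnit q) (hab : (a : ℕ) + 1 = b)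
    (hquad : (t + 1) * (t - algebraMap R H q) = 0) (hXY : Commute (L (a + 1)) (L (b + 1)))
    (hTLT : t * L (a + 1) * t = algebraMap R H q * L (b + 1))
    (hLt : ∀ j : Fin r, j ≠ a → j ≠ b → Commute (L (j + 1)) t) (hx : x * t = q • x)
    (hxLI : LinearIndependent R fun β : Fin r → Fin m => x * akLmonF L β)
    (c : (Fin r → Fin m) → R)
    (hc : (∑ β, c β • (x * akLmonF L β)) * t = q • ∑ β, c β • (x * akLmonF L β))
    (β : Fin r → Fin m) : c (β ∘ Equiv.swap a b) = c β := by
  have hne : a ≠ b := fun h => by simp [h] at hab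
  have ht := mul_self_eq_of_quadratic hquad
  rw [← Algebra.smul_def] at hTLT
  have hmon := akLmonF_mul (m := m) hab hXY (mul_eq_mul_add_smul_of_conj hq ht hTLT)
    (mul_eq_mul_sub_smul_of_conj hq ht hTLT) hLt
  refine congrFun (comp_eq_of_apply_eq_smul (LinearMap.mulRight R t) (transferSet a b) hq hxLI
    (σ := fun β => β ∘ Equiv.swap a b) (fun β => by funext j; simp) (fun β => Nat.dist (β a) (β b))
    (fun β γ hγ => eq_or_dist_lt_of_mem_transferSet hne hγ) (fun β => ?_) c hc) β
  rw [LinearMap.mulRight_apply, mul_assoc, hmon, mul_add, ← mul_assoc, hx, smul_mul_assoc,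
    mul_smul_comm, mul_sub, mul_sum, mul_sum]

end Coefficients

end ArikiKoike

/-- Suppose `z = Σ_{b ∈ (ℤ/m)^r} c_b x_{(r)} L^b` lies in
`x_{(r)}H_u(r) ∩ H_u(r)x_{(r)}`, where `x_{(r)} = Σ_{w ∈ S_r} T_w`.  Then the
coefficients are symmetric: `c_b = c_{b·w}` for all `b` and all `w ∈ S_r`. -/
theorem ariki_koike_symmetric_coefficients
    (R : Type) [CommRing R] (q : R) (hq : IsUnit q) (m r : ℕ)
    (H : Type) [Ring H] [Algebra R H]
    (T L : ℕ → H)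
    (hquad : ∀ i, 1 ≤ i → i ≤ r - 1 → (T i + 1) * (T i - algebraMap R H q) = 0)
    (hLL : ∀ i j, 1 ≤ i → i ≤ r → 1 ≤ j → j ≤ r → L i * L j = L j * L i)
    (hTLT : ∀ i, 1 ≤ i → i ≤ r - 1 → T i * L i * T i = algebraMap R H q * L (i + 1))
    (hLT : ∀ i j, 1 ≤ i → i ≤ r - 1 → 1 ≤ j → j ≤ r → j ≠ i → j ≠ i + 1 →
      L j * T i = T i * L j)
    -- the elements `T_w`, `w ∈ S_r`
    (Tw : Equiv.Perm (Fin r) → H)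
    (hTwmul : ∀ w w' : Equiv.Perm (Fin r), permLen (w * w') = permLen w + permLen w' →
      Tw (w * w') = Tw w * Tw w')
    (hTwgen : ∀ (i : ℕ) (h1 : 1 ≤ i) (h2 : i < r),
      Tw (Equiv.swap ⟨i - 1, by omega⟩ ⟨i, h2⟩) = T i)
    -- `x_{(r)} = Σ_{w ∈ S_r} T_w`
    (x : H) (hx : x = ∑ w : Equiv.Perm (Fin r), Tw w)
    -- `{x_{(r)} L^b : b ∈ (ℤ/m)^r}` is an `R`-basis of `x_{(r)}H_u(r)`
    (hxLI : LinearIndependent R (fun b : Fin r → Fin m => x * akLmonF L b))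
    (c : (Fin r → Fin m) → R)
    (z : H) (hz : z = ∑ b : Fin r → Fin m, c b • (x * akLmonF L b))
    -- `z ∈ H_u(r) x_{(r)}` (membership in `x_{(r)} H_u(r)` holds by the shape of `z`)
    (hzright : ∃ h : H, z = h * x) :
    ∀ (b : Fin r → Fin m) (w : Equiv.Perm (Fin r)), c (b ∘ w) = c b := by
  intro β w
  refine comp_perm_eq_of_comp_swap c (fun a b hab β' => ?_) w β
  obtain ⟨a, ha⟩ := a
  obtain ⟨b, hb⟩ := b
  simp only at hab
  subst hab
  have hTs : Tw (Equiv.swap ⟨a, ha⟩ ⟨a + 1, hb⟩) = T (a + 1) := by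
    simpa using hTwgen (a + 1) (by omega) hb
  have hquad' := hquad (a + 1) (by omega) (by omega)
  have hxT : x * T (a + 1) = q • x := by
    rw [hx, ← hTs]
    exact ArikiKoike.sum_mul_swap_eq_smul_sum Tw hTwmul rfl (hTs ▸ hquad')
  obtain ⟨h, rfl⟩ := hzright
  refine ArikiKoike.comp_swap_eq_of_mul_eq_smul hq rfl hquad'
    (hLL _ _ (by omega) (by omega) (by omega) (by omega)) (hTLT (a + 1) (by omega) (by omega))
    (fun j hja hjb => ?_) hxT hxLI c ?_ β'
  · exact hLT _ _ (by omega) (by omega) (by omega) (by omega)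
      (fun hj => hja (Fin.ext (by simp at hj ⊢; omega)))
      (fun hj => hjb (Fin.ext (by simp at hj ⊢; omega)))
  · rw [← hz, mul_assoc, hxT, mul_smul_comm]
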